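/- Let m, n ∈ ℕ. If g ∈ S_n is an n-cycle and h ∈ S_m has cycle type α, then the element (h,1,…,1;g) of S_m ≀ S_n, regarded as a permutation of {1,…,m} × {1,…,n}, has cycle type nα, where nα is the partition of mn obtained by multiplying every part of α by n. -/

import Mathlib

/- ## Common definitions -/

open Equiv Finset
open scoped Classical

noncomputable section

namespace CD

/-! ### Border strips and border-strip tableaux -/

/-- Two cells of a Young diagram are adjacent if they share an edge. -/
def Adj (c d : ℕ × ℕ) : Prop :=
  (c.1 = d.1 ∧ (c.2 + 1 = d.2 ∨ d.2 + 1 = c.2)) ∨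
  (c.2 = d.2 ∧ (c.1 + 1 = d.1 ∨ d.1 + 1 = c.1))

/-- A finite set of cells is (edge-)connected. -/
def IsConnectedSet (s : Finset (ℕ × ℕ)) : Prop :=
  ∀ c ∈ s, ∀ d ∈ s, Relation.ReflTransGen (fun x y => y ∈ s ∧ Adj x y) c d

/-- A set of cells contains no 2 × 2 square. -/
def NoSquare (s : Finset (ℕ × ℕ)) : Prop :=
  ∀ i j : ℕ, ¬ ((i, j) ∈ s ∧ (i + 1, j) ∈ s ∧ (i, j + 1) ∈ s ∧ (i + 1, j + 1) ∈ s)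

/-- `ν / μ` is a border strip: it is connected and contains no 2 × 2 square. -/
def IsBorderStrip (μ ν : YoungDiagram) : Prop :=
  μ ≤ ν ∧ (ν.cells \ μ.cells).Nonempty ∧ IsConnectedSet (ν.cells \ μ.cells) ∧
    NoSquare (ν.cells \ μ.cells)

/-- `ν / μ` is a border strip of length `l`. -/
def IsBorderStripOfSize (μ ν : YoungDiagram) (l : ℕ) : Prop :=
  IsBorderStrip μ ν ∧ (ν.cells \ μ.cells).card = l

/-- The height of a set of cells: one less than the number of nonempty rows. -/
def heightOf (s : Finset (ℕ × ℕ)) : ℕ := (s.image Prod.fst).card - 1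

/-- The row number of a set of cells: the index of the lowest-numbered row it meets. -/
def rowNum (s : Finset (ℕ × ℕ)) : ℕ := sInf {i | ∃ j, (i, j) ∈ s}

/-- A border-strip tableau of shape `lam / μ` and type `α`, encoded as the chain of
partitions `μ = λ⁰ ⊆ λ¹ ⊆ ⋯ ⊆ λᵏ = lam` in which the `j`-th strip `λʲ⁺¹ / λʲ` is a
border strip of length `α_j`.  (The chain is frozen at `lam` beyond `α.length`.) -/
structure BST (μ lam : YoungDiagram) (α : List ℕ) where
  c : ℕ → YoungDiagram
  c_zero : c 0 = μ
  c_top : ∀ j, α.length ≤ j → c j = lam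
  strip : ∀ j, j < α.length → IsBorderStripOfSize (c j) (c (j + 1)) (α.getD j 0)

/-- The cells of the `j`-th border strip of a border-strip tableau. -/
def stepCells {μ lam : YoungDiagram} {α : List ℕ} (T : BST μ lam α) (j : ℕ) :
    Finset (ℕ × ℕ) :=
  (T.c (j + 1)).cells \ (T.c j).cells

/-- The sign of a border-strip tableau: `(-1)` to the sum of the heights of its strips. -/
def sgnBST {μ lam : YoungDiagram} {α : List ℕ} (T : BST μ lam α) : ℤ :=
  (-1) ^ (∑ j ∈ Finset.range α.length, heightOf (stepCells T j))

/-- `γ^{⋆m}`: the composition obtained from `γ` by repeating each part `m` times. -/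
def starComp (m : ℕ) (γ : List ℕ) : List ℕ := (γ.map (List.replicate m)).flatten

/-- An `m`-border-strip tableau of shape `lam/μ` and type `γ`: a border-strip tableau of
type `γ^{⋆m}` such that for each part of `γ` the row numbers of the `m` consecutive
strips corresponding to its `m` copies are weakly decreasing. -/
structure MBST (m : ℕ) (μ lam : YoungDiagram) (γ : List ℕ) extends BST μ lam (starComp m γ) where
  rows : ∀ j, j < γ.length → ∀ s, s + 1 < m →
    rowNum (stepCells toBST (j * m + s + 1)) ≤ rowNum (stepCells toBST (j * m + s))

/-- `a_{λ/μ,γ}`: the sum of the signs of all `m`-border-strip tableaux of shape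
`lam/μ` and type `γ`. -/
def aCoeff (m : ℕ) (μ lam : YoungDiagram) (γ : List ℕ) : ℤ :=
  ∑ᶠ T : MBST m μ lam γ, sgnBST T.toBST

/-! ### Cycle types and skew characters -/

/-- The cycle type of a permutation as a partition of `|β|`, i.e. including parts
equal to `1` for the fixed points. -/
def fullCycleType {β : Type*} [Fintype β] [DecidableEq β] (g : Equiv.Perm β) : Multiset ℕ :=
  g.cycleType + Multiset.replicate (Fintype.card β - g.support.card) 1

/-- A canonical list (weakly increasing) listing the parts of a multiset. -/
def sortedList (M : Multiset ℕ) : List ℕ := M.sort (· ≤ ·)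

/-- The skew character `χ^{λ/μ}`, defined (via the Murnaghan–Nakayama rule) as a
function on an arbitrary finite permutation group. -/
def skewChar (μ lam : YoungDiagram) {β : Type*} [Fintype β] [DecidableEq β]
    (g : Equiv.Perm β) : ℂ :=
  ((aCoeff 1 μ lam (sortedList (fullCycleType g)) : ℤ) : ℂ)

/-- The Young diagram whose row lengths are the parts of the multiset `M`. -/
def ydOfMultiset (M : Multiset ℕ) : YoungDiagram :=
  YoungDiagram.ofRowLens (M.sort (· ≥ ·)) (Multiset.pairwise_sort _ _).sortedGE

/-- The irreducible character `χ^ν` of the symmetric group labelled by the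
partition `ν`. -/
def chiP {n : ℕ} (ν : Nat.Partition n) {β : Type*} [Fintype β] [DecidableEq β]
    (g : Equiv.Perm β) : ℂ :=
  skewChar ⊥ (ydOfMultiset ν.parts) g

/-- `g_α`: a permutation of cycle type `α` (defined by choice; the identity if no such
permutation exists). -/
def permOf (β : Type*) [Fintype β] [DecidableEq β] (M : Multiset ℕ) : Equiv.Perm β :=
  if h : ∃ g : Equiv.Perm β, fullCycleType g = M then h.choose else 1

/-- `z_α`: the order of the centralizer of an element of cycle type `α`. -/
def zOf (β : Type*) [Fintype β] [DecidableEq β] (M : Multiset ℕ) : ℕ :=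
  Nat.card (Subgroup.centralizer {permOf β M})


/-! ### Characters of finite groups -/

/-- `φ` is a character of `G`: it is afforded by some finite-dimensional complex
representation. -/
def IsChar {G : Type} [Group G] (φ : G → ℂ) : Prop :=
  ∃ V : FDRep ℂ G, ∀ g, V.character g = φ g

/-- `φ` is an irreducible character of `G`. -/
def IsIrrChar {G : Type} [Group G] (φ : G → ℂ) : Prop :=
  ∃ V : FDRep ℂ G, CategoryTheory.Simple V ∧ ∀ g, V.character g = φ g

/-- `ψ`, a function on `G`, restricts to a character of the subgroup `H`. -/
def IsCharOn {G : Type} [Group G] (H : Subgroup G) (ψ : G → ℂ) : Prop :=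
  ∃ V : FDRep ℂ H, ∀ (w : G) (hw : w ∈ H), V.character ⟨w, hw⟩ = ψ w

/-- The usual inner product of class functions on a finite group. -/
def innerChar {G : Type*} [Group G] [Fintype G] (φ ψ : G → ℂ) : ℂ :=
  (Nat.card G : ℂ)⁻¹ * ∑ g : G, φ g * (starRingEnd ℂ) (ψ g)

/-- The inner product of two functions over a subgroup `H` of `G`. -/
def innerOn {G : Type*} [Group G] [Fintype G] (H : Subgroup G) (φ ψ : G → ℂ) : ℂ :=
  (Nat.card H : ℂ)⁻¹ * ∑ g : G, if g ∈ H then φ g * (starRingEnd ℂ) (ψ g) else 0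

/-- The induced character along an (injective) group homomorphism `f : H →* G`. -/
def indHom {H G : Type*} [Group H] [Group G] [Fintype H] [Fintype G]
    (f : H →* G) (φ : H → ℂ) (g : G) : ℂ :=
  (Nat.card H : ℂ)⁻¹ * ∑ x : G, ∑ h : H, if x⁻¹ * g * x = f h then φ h else 0

/-- Transport of permutations along an equivalence, as a group homomorphism. -/
def permCongrHom {α β : Type*} (e : α ≃ β) : Equiv.Perm α →* Equiv.Perm β where
  toFun g := (e.symm.trans g).trans e
  map_one' := by ext x; simp
  map_mul' a b := by ext x; simp

/-- The character of `S_{ℓ 0} × ⋯ × S_{ℓ (d-1)}` induced to the symmetric group `S_m`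
(realized on `Fin m`), where the Young subgroup is embedded via an equivalence
`(Σ i, Fin (ℓ i)) ≃ Fin m` and `θs i` is a character of `S_{ℓ i}`; the induced
character does not depend on the choice of equivalence. -/
def youngIndAt {d : ℕ} (ℓ : Fin d → ℕ) {m : ℕ} (hm : ∑ i, ℓ i = m)
    (θs : ∀ i, Equiv.Perm (Fin (ℓ i)) → ℂ) (g : Equiv.Perm (Fin m)) : ℂ :=
  indHom ((permCongrHom ((Fintype.equivFin ((i : Fin d) × Fin (ℓ i))).trans
      (finCongr (by simpa using hm)))).comp
      (Equiv.Perm.sigmaCongrRightHom fun i : Fin d => Fin (ℓ i)))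
    (fun k => ∏ i, θs i (k i)) g

/-! ### The wreath product `S_m ≀ S_n` as a subgroup of `S_{mn}` -/

/-- The element `(h₁,…,hₙ; g)` of the wreath product, as a permutation of
`Fin m × J`; it sends `(i, j)` to `(k (g j) i, g j)`. -/
def wr {m : ℕ} {J : Type*} (k : J → Equiv.Perm (Fin m)) (g : Equiv.Perm J) :
    Equiv.Perm (Fin m × J) where
  toFun p := (k (g p.2) p.1, g p.2)
  invFun p := ((k p.2).symm p.1, g.symm p.2)
  left_inv p := by simp
  right_inv p := by simp

/-- The wreath product `S_m ≀ S_J` as a subgroup of the permutations of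
`Fin m × J`. -/
def wreath (m : ℕ) (J : Type*) : Subgroup (Equiv.Perm (Fin m × J)) where
  carrier := {w | ∃ k g, w = wr k g}
  one_mem' := ⟨fun _ => 1, 1, by ext p <;> simp [wr]⟩
  mul_mem' := by
    rintro w w' ⟨k, g, rfl⟩ ⟨k', g', rfl⟩
    exact ⟨fun j => k j * k' (g⁻¹ j), g * g', by
      ext p <;> simp [wr, Equiv.Perm.mul_apply]⟩
  inv_mem' := by
    rintro w ⟨k, g, rfl⟩
    have h1 : wr (fun j => (k (g j))⁻¹) g⁻¹ * wr k g = 1 := by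
      ext p <;> simp [wr, Equiv.Perm.mul_apply]
    exact ⟨fun j => (k (g j))⁻¹, g⁻¹, (eq_inv_of_mul_eq_one_left h1).symm⟩

/-- The embedding of the base group `B = S_m × ⋯ × S_m` in the wreath product. -/
def baseHom (m : ℕ) (J : Type*) : (J → Equiv.Perm (Fin m)) →* Equiv.Perm (Fin m × J) where
  toFun k := wr k 1
  map_one' := by ext p <;> simp [wr]
  map_mul' k k' := by ext p <;> simp [wr, Equiv.Perm.mul_apply]

/-- The permutation of `J` induced by an element of the wreath product on the blocks. -/
def sndPerm {m : ℕ} {J : Type*} (w : Equiv.Perm (Fin m × J)) : Equiv.Perm J :=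
  if h : ∃ f : Equiv.Perm J, ∀ p, (w p).2 = f p.2 then h.choose else 1

/-- The permutation of the fiber `Fin m × {j}` induced by `w ^ c`; for `w` in the
wreath product and `c` the length of the cycle of `j`, this is (a conjugate of) the
cycle product of the base-group coordinates of `w` along the cycle of `j`. -/
def fiberPerm {m : ℕ} {J : Type*} (w : Equiv.Perm (Fin m × J)) (j : J) (c : ℕ) :
    Equiv.Perm (Fin m) :=
  if h : Function.Bijective (fun i : Fin m => ((w ^ c) (i, j)).1) then
    Equiv.ofBijective _ h else 1

/-- `j` is the canonical representative of its cycle under `g`. -/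
def repMin {J : Type*} [Fintype J] (g : Equiv.Perm J) (j : J) : Prop :=
  ∀ t : ℕ, Fintype.equivFin J j ≤ Fintype.equivFin J ((g ^ t) j)

/-- The character `θ̃^{×n}` of the wreath product afforded by `V^{⊗n}`, where the base
group acts factorwise and the top group permutes the factors: its value on
`(h₁,…,hₙ; g)` is the product over the cycles of `g` of `θ` evaluated at the product
of the `hᵢ` along the cycle. -/
def thetaTilde {m : ℕ} {J : Type*} [Fintype J] (θ : Equiv.Perm (Fin m) → ℂ)
    (w : Equiv.Perm (Fin m × J)) : ℂ :=
  ∏ j ∈ Finset.univ.filter (repMin (sndPerm w)),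
    θ (fiberPerm w j (Function.minimalPeriod (sndPerm w) j))

/-- The inflation `Inf χ^ν` of the irreducible character `χ^ν` of `S_n` along the
canonical surjection `S_m ≀ S_n ↠ S_n`. -/
def inflChi {n : ℕ} (ν : Nat.Partition n) {m : ℕ} {J : Type*} [Fintype J] [DecidableEq J]
    (w : Equiv.Perm (Fin m × J)) : ℂ :=
  chiP ν (sndPerm w)

/-- The deflation map `Def^θ_{S_n}` (composed with restriction from `S_{mn}`): the
virtual character `ψ ↦ Σ_ν ⟨Res_W ψ, θ̃^{×n}·Inf χ^ν⟩_W · χ^ν`, which sends the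
irreducible character `θ̃^{×n}·Inf χ^ν` of `W = S_m ≀ S_n` to `χ^ν` and every other
irreducible character of `W` to `0`. -/
def defl (m : ℕ) {J : Type*} [Fintype J] [DecidableEq J] (θ : Equiv.Perm (Fin m) → ℂ)
    (ψ : Equiv.Perm (Fin m × J) → ℂ) (x : Equiv.Perm J) : ℂ :=
  ∑ ν : Nat.Partition (Fintype.card J),
    innerOn (wreath m J) ψ (fun w => thetaTilde θ w * inflChi ν w) * chiP ν x


/-! ### Abacus displays, `n`-quotients, `n`-signs -/

/-- The beta-set (first-column hook lengths) of `lam` displayed with `b` beads. -/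
def betaSet (lam : YoungDiagram) (b : ℕ) : Finset ℕ :=
  (Finset.range b).image fun i => lam.rowLen i + (b - 1 - i)

/-- The beta-set read off runner `i` of an `n`-runner abacus display with `b` beads. -/
def runnerBeta (n b i : ℕ) (lam : YoungDiagram) : Finset ℕ :=
  ((betaSet lam b).filter fun p => p % n = i).image fun p => p / n

/-- The multiset of parts of the partition whose beta-set is `S`. -/
def partsOfBeta (S : Finset ℕ) : Multiset ℕ :=
  S.val.map fun x => x - (S.filter fun y => y < x).card

/-- The `i`-th component of the `n`-quotient of `lam`, computed from an abacus display
with `b` beads. -/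
def quotYD (n b i : ℕ) (lam : YoungDiagram) : YoungDiagram :=
  ydOfMultiset (partsOfBeta (runnerBeta n b i lam))

/-- A standard number of beads to use for abacus displays related to `lam`:
a multiple of `n` exceeding the number of rows of `lam`. -/
def stdB (n : ℕ) (lam : YoungDiagram) : ℕ := n * (lam.card + 1)

/-- The `i`-th component `(μ^{(i)}, λ^{(i)})` of the `n`-quotient of the skew
partition `lam/μ` (both read from `n`-runner abacus displays with the same number of
beads). -/
def nQuotSkew (n : ℕ) (μ lam : YoungDiagram) (i : ℕ) : YoungDiagram × YoungDiagram :=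
  (quotYD n (stdB n lam) i μ, quotYD n (stdB n lam) i lam)

/-- `lam/μ` is `n`-decomposable: there is a border-strip tableau of shape `lam/μ` and
type `(n, …, n)` (`m` parts). -/
def IsNDecomp (n m : ℕ) (μ lam : YoungDiagram) : Prop :=
  Nonempty (BST μ lam (List.replicate m n))

/-- The `n`-sign `ε_n(λ/μ)`: the common sign of the border-strip tableaux of shape
`lam/μ` and type `(n^m)` (equivalently, the sign of the relabelling permutation of the
corresponding abacus displays). -/
def epsN (n m : ℕ) (μ lam : YoungDiagram) : ℤ :=
  if h : Nonempty (BST μ lam (List.replicate m n)) then sgnBST h.some else 1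

/-- `lam` has empty `n`-core: every runner of an `n`-runner abacus display of `lam`
carries the same number of beads as for the empty partition. -/
def HasEmptyNCore (n : ℕ) (lam : YoungDiagram) : Prop :=
  ∀ i < n, ((betaSet lam (stdB n lam)).filter fun p => p % n = i).card = stdB n lam / n

/-- `lam/μ` is a horizontal strip: no two of its boxes lie in the same column. -/
def IsHorizontalStrip (μ lam : YoungDiagram) : Prop :=
  μ ≤ lam ∧ ∀ i i' j : ℕ, (i, j) ∈ lam.cells \ μ.cells → (i', j) ∈ lam.cells \ μ.cells → i = i'

/-- An `n`-quotient border-strip tableau of shape given by the components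
`(μs i, lams i)` and type `α`: an `n`-tuple of chains, exactly one of which grows by a
border strip of length `α_j` at step `j`. -/
structure NQuotBST (n : ℕ) (μs lams : Fin n → YoungDiagram) (α : List ℕ) where
  c : Fin n → ℕ → YoungDiagram
  c_zero : ∀ i, c i 0 = μs i
  c_top : ∀ i, ∀ j, α.length ≤ j → c i j = lams i
  step : ∀ j, j < α.length → ∃ i₀, IsBorderStripOfSize (c i₀ j) (c i₀ (j + 1)) (α.getD j 0)
      ∧ ∀ i, i ≠ i₀ → c i (j + 1) = c i j

/-- The product of the signs of the components of an `n`-quotient border-strip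
tableau. -/
def sgnNQ {n : ℕ} {μs lams : Fin n → YoungDiagram} {α : List ℕ}
    (Q : NQuotBST n μs lams α) : ℤ :=
  ∏ i : Fin n,
    (-1 : ℤ) ^ (∑ j ∈ Finset.range α.length, heightOf ((Q.c i (j + 1)).cells \ (Q.c i j).cells))

/-! ### Symmetric functions in power-sum coordinates -/

/-- The ring of symmetric functions with rational coefficients, presented as the
polynomial ring `ℚ[p₁, p₂, …]` in the power sums; the variable `X i` is `p_{i+1}`. -/
abbrev SymF := MvPolynomial ℕ ℚ

/-- The power-sum symmetric function `p_l`. -/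
def pSym (l : ℕ) : SymF := MvPolynomial.X (l - 1)

/-- The product `p_M` over a multiset of parts. -/
def pProdM (M : Multiset ℕ) : SymF := (M.map pSym).prod

/-- The product `p_γ = p_{γ₁} ⋯ p_{γ_d}` over a composition. -/
def pProdL (γ : List ℕ) : SymF := (γ.map pSym).prod

/-- `z_M` for a multiset of parts: `∏ k k^{m_k} m_k!`. -/
def zMult (M : Multiset ℕ) : ℕ :=
  M.prod * ∏ k ∈ M.toFinset, (M.count k).factorial

/-- The algebra endomorphism of `Λ` sending `p_k` to `p_{kl}`. -/
def frob (l : ℕ) : SymF →ₐ[ℚ] SymF :=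
  MvPolynomial.aeval fun k => MvPolynomial.X ((k + 1) * l - 1)

/-- Plethysm `f ∘ g` of symmetric functions: the unique `ℚ`-algebra map in `f`
with `p_l ∘ g = g(p_k ↦ p_{kl})`. -/
def plethysm (f g : SymF) : SymF :=
  MvPolynomial.aeval (fun i => frob (i + 1) g) f

/-- The complete homogeneous symmetric function `h_m = Σ_{α ⊢ m} p_α / z_α`. -/
def hSym (m : ℕ) : SymF :=
  ∑ α : Nat.Partition m, ((zMult α.parts : ℚ)⁻¹) • pProdM α.parts

/-- The skew Schur function
`s_{λ/μ} = Σ_{α ⊢ |λ/μ|} z_α⁻¹ χ^{λ/μ}(α) p_α`. -/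
def skewSchur (μ lam : YoungDiagram) : SymF :=
  ∑ α : Nat.Partition (lam.card - μ.card),
    (((zMult α.parts : ℚ)⁻¹) * ((aCoeff 1 μ lam (sortedList α.parts) : ℤ) : ℚ)) • pProdM α.parts

/-- The Schur function `s_κ` of a partition `κ`. -/
def schurOf {m : ℕ} (κ : Nat.Partition m) : SymF := skewSchur ⊥ (ydOfMultiset κ.parts)

/-- `z` of an exponent vector: `∏ i (i+1)^{d i} (d i)!`. -/
def zExp (d : ℕ →₀ ℕ) : ℕ := d.prod fun i e => (i + 1) ^ e * e.factorial

/-- The Hall inner product on `Λ`, for which `⟨p_λ, p_μ⟩ = δ_{λμ} z_λ`. -/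
def hallInner (f g : SymF) : ℚ :=
  ∑ d ∈ f.support, f.coeff d * g.coeff d * (zExp d : ℚ)


end CD

/-! Write `w = (h,1,…,1;g)` and let `z` be the coordinate carrying `h`. The second coordinate of
`w` moves by the `n`-cycle `g`, so every `w`-period is a multiple of `n`; starting in the fibre
over `z`, `w` first returns to that fibre after `n` steps, having applied `h` exactly once. Hence
`(i, j)` has `w`-period `n` times the `h`-period of `i`. Finally, the cycle type of a permutation
is determined by the multiset of periods of its points, in which a part `d` accounts for `d`
points of period `d`. -/

open Function

namespace Multiset

lemma count_bind_replicate_self (M : Multiset ℕ) (b : ℕ) :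
    (M.bind fun d => replicate d d).count b = b * M.count b := by
  induction M using Multiset.induction with
  | empty => simp
  | cons a M ih =>
    rw [cons_bind, count_add, ih, count_cons, count_replicate]
    split_ifs <;> grind

lemma eq_of_bind_replicate_self_eq {M N : Multiset ℕ} (hM : 0 ∉ M) (hN : 0 ∉ N)
    (h : (M.bind fun d => replicate d d) = N.bind fun d => replicate d d) : M = N := by
  ext b
  rcases Nat.eq_zero_or_pos b with rfl | hb
  · rw [count_eq_zero.2 hM, count_eq_zero.2 hN]
  · simpa only [count_bind_replicate_self, Nat.mul_left_cancel_iff hb] using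
      congrArg (count b) h

lemma map_mul_bind_replicate_self (n : ℕ) (M : Multiset ℕ) :
    ((M.map (n * ·)).bind fun d => replicate d d) =
      n • (M.bind fun d => replicate d d).map (n * ·) := by
  induction M using Multiset.induction with
  | empty => simp
  | cons a M ih => simp [ih, map_replicate, nsmul_replicate, smul_add]

lemma map_fst_product {α β : Type*} (s : Multiset α) (t : Multiset β) :
    (s ×ˢ t).map Prod.fst = card t • s := by
  induction s using Multiset.induction with
  | empty => simp
  | cons a s ih =>
    rw [cons_product, map_add, ih, map_map, Function.comp_def, map_const', ← singleton_add,
      nsmul_add, nsmul_singleton, add_comm]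

end Multiset

namespace Equiv.Perm

variable {β : Type*}

lemma isPeriodicPt_iff {σ : Perm β} {t : ℕ} {x : β} :
    IsPeriodicPt σ t x ↔ (σ ^ t) x = x := by
  rw [IsPeriodicPt, IsFixedPt, coe_pow]

lemma minimalPeriod_eq_of_pow_apply_eq {σ τ : Perm β} {x : β}
    (h : ∀ t : ℕ, (σ ^ t) x = (τ ^ t) x) : minimalPeriod σ x = minimalPeriod τ x :=
  minimalPeriod_eq_minimalPeriod_iff.2 fun t => by simp only [isPeriodicPt_iff, h]

lemma IsCycle.minimalPeriod_eq [Finite β] {σ : Perm β} (hσ : σ.IsCycle) {x : β}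
    (hx : σ x ≠ x) : minimalPeriod σ x = orderOf σ :=
  Nat.dvd_right_iff_eq.1 fun t => by
    rw [← isPeriodicPt_iff_minimalPeriod_dvd, isPeriodicPt_iff, orderOf_dvd_iff_pow_eq_one,
      hσ.pow_eq_one_iff' hx]

lemma Disjoint.minimalPeriod_mul_left {σ τ : Perm β} (hd : σ.Disjoint τ) {x : β}
    (hx : σ x ≠ x) : minimalPeriod (σ * τ) x = minimalPeriod σ x :=
  minimalPeriod_eq_of_pow_apply_eq fun t => by
    rw [hd.commute.mul_pow, mul_apply,
      pow_apply_eq_self_of_apply_eq_self ((hd x).resolve_left hx)]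

variable [Fintype β]

lemma exists_pow_apply_eq_of_minimalPeriod_eq_card {σ : Perm β} {z : β}
    (hz : minimalPeriod σ z = Fintype.card β) (x : β) :
    ∃ s < Fintype.card β, (σ ^ s) z = x := by
  have hinj : Injective fun s : Fin (Fintype.card β) => (σ ^ (s : ℕ)) z := by
    intro s t hst
    refine Fin.ext (iterate_injOn_Iio_minimalPeriod (f := σ) (x := z) ?_ ?_ ?_) <;>
      simp_all [coe_pow]
  obtain ⟨s, rfl⟩ := ((Fintype.bijective_iff_injective_and_card _).2 ⟨hinj, by simp⟩).2 x
  exact ⟨s, s.2, rfl⟩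

variable [DecidableEq β]

lemma cycleType_bind_replicate (σ : Perm β) :
    (σ.cycleType.bind fun d => Multiset.replicate d d) =
      σ.support.val.map (minimalPeriod σ) := by
  induction σ using cycle_induction_on with
  | base_one => simp
  | base_cycles σ hσ =>
    rw [hσ.cycleType, Multiset.singleton_bind, Multiset.map_congr rfl
      fun x hx => (hσ.minimalPeriod_eq (mem_support.1 hx)).trans hσ.orderOf,
      Multiset.map_const']
    rfl
  | induction_disjoint σ τ hd _ ihσ ihτ =>
    rw [hd.cycleType_mul, Multiset.add_bind, ihσ, ihτ, hd.support_mul,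
      ← Finset.disjUnion_eq_union _ _ hd.disjoint_support, Finset.disjUnion_val,
      Multiset.map_add]
    congr 1 <;> refine Multiset.map_congr rfl fun x hx => ?_
    · exact (hd.minimalPeriod_mul_left (mem_support.1 hx)).symm
    · rw [hd.commute.eq]
      exact (hd.symm.minimalPeriod_mul_left (mem_support.1 hx)).symm

end Equiv.Perm

namespace CD

section FullCycleType

variable {β : Type*} [Fintype β] [DecidableEq β]

lemma zero_notMem_fullCycleType (σ : Perm β) : 0 ∉ fullCycleType σ :=
  fun h => (σ.partition.parts_pos h).false

lemma fullCycleType_bind_replicate (σ : Perm β) :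
    ((fullCycleType σ).bind fun d => Multiset.replicate d d) =
      (univ.val : Multiset β).map (minimalPeriod σ) := by
  have hfix : ∀ x ∈ σ.supportᶜ, minimalPeriod σ x = 1 := fun x hx =>
    minimalPeriod_eq_one_iff_isFixedPt.2 (Perm.notMem_support.1 (Finset.mem_compl.1 hx))
  rw [fullCycleType, Multiset.add_bind, Perm.cycleType_bind_replicate,
    ← Finset.union_compl σ.support, ← Finset.disjUnion_eq_union _ _ disjoint_compl_right,
    Finset.disjUnion_val, Multiset.map_add, Multiset.map_congr rfl hfix, Multiset.map_const',
    Finset.card_val, Finset.card_compl]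
  simp [Multiset.bind, Multiset.join, Multiset.map_replicate, Multiset.sum_replicate,
    Multiset.nsmul_singleton]

lemma minimalPeriod_eq_card_of_fullCycleType_eq {σ : Perm β}
    (hσ : fullCycleType σ = {Fintype.card β}) (x : β) :
    minimalPeriod σ x = Fintype.card β := by
  have h := fullCycleType_bind_replicate σ
  rw [hσ, Multiset.singleton_bind] at h
  exact Multiset.eq_of_mem_replicate (h ▸ Multiset.mem_map_of_mem _ (mem_univ x))

end FullCycleType

section Wreath

variable {m : ℕ} {J : Type*} (k : J → Perm (Fin m)) (g : Perm J)

lemma wr_apply (p : Fin m × J) : wr k g p = (k (g p.2) p.1, g p.2) := rfl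

lemma wr_pow_apply_snd (t : ℕ) (p : Fin m × J) : ((wr k g ^ t) p).2 = (g ^ t) p.2 := by
  induction t generalizing p with
  | zero => rfl
  | succ t ih => simp only [pow_succ, Perm.mul_apply, ih]; rfl

variable {k} {z : J} (hk : ∀ j ≠ z, k j = 1)
include hk

lemma wr_pow_apply_of_lt_minimalPeriod (i : Fin m) {t : ℕ} (ht : t < minimalPeriod g z) :
    (wr k g ^ t) (i, z) = (i, (g ^ t) z) := by
  induction t with
  | zero => rfl
  | succ t ih =>
    have hne : (g ^ (t + 1)) z ≠ z := fun h =>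
      not_isPeriodicPt_of_pos_of_lt_minimalPeriod t.succ_ne_zero ht (Perm.isPeriodicPt_iff.2 h)
    rw [pow_succ', Perm.mul_apply, ih (by omega), wr_apply, ← Perm.mul_apply, ← pow_succ',
      hk _ hne, Perm.one_apply]

lemma wr_pow_minimalPeriod_apply [Finite J] (i : Fin m) :
    (wr k g ^ minimalPeriod g z) (i, z) = (k z i, z) := by
  obtain ⟨t, ht⟩ := Nat.exists_eq_add_one.2 (minimalPeriod_pos_of_mem_periodicPts
    (g.injective.mem_periodicPts z))
  rw [ht, pow_succ', Perm.mul_apply, wr_pow_apply_of_lt_minimalPeriod g hk i (by omega),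
    wr_apply, ← Perm.mul_apply, ← pow_succ', ← ht,
    Perm.isPeriodicPt_iff.1 (isPeriodicPt_minimalPeriod g z)]

lemma minimalPeriod_wr_apply [Finite J] (i : Fin m) :
    minimalPeriod (wr k g) (i, z) = minimalPeriod g z * minimalPeriod (k z) i := by
  set n := minimalPeriod g z
  have hn : n ≠ 0 := (minimalPeriod_pos_of_mem_periodicPts (g.injective.mem_periodicPts z)).ne'
  have hpow : ∀ (q : ℕ) (i : Fin m), ((wr k g ^ n) ^ q) (i, z) = ((k z ^ q) i, z) := by
    intro q
    induction q with
    | zero => exact fun _ => rfl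
    | succ q ih =>
      intro i
      rw [pow_succ, Perm.mul_apply, wr_pow_minimalPeriod_apply g hk, ih, pow_succ, Perm.mul_apply]
  have hfibre : minimalPeriod (wr k g ^ n) (i, z) = minimalPeriod (k z) i :=
    minimalPeriod_eq_minimalPeriod_iff.2 fun q => by
      simp only [Perm.isPeriodicPt_iff, hpow, Prod.ext_iff, and_true]
  have hdvd : n ∣ minimalPeriod (wr k g) (i, z) := by
    refine (Perm.isPeriodicPt_iff.2 ?_).minimalPeriod_dvd
    rw [← wr_pow_apply_snd k g _ (i, z),
      Perm.isPeriodicPt_iff.1 (isPeriodicPt_minimalPeriod (wr k g) (i, z))]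
  rw [Perm.coe_pow, minimalPeriod_iterate_eq_div_gcd hn, Nat.gcd_eq_right hdvd] at hfibre
  rw [← hfibre, Nat.mul_div_cancel' hdvd]

lemma minimalPeriod_wr_apply_pow [Finite J] (i : Fin m) {s : ℕ} (hs : s < minimalPeriod g z) :
    minimalPeriod (wr k g) (i, (g ^ s) z) = minimalPeriod g z * minimalPeriod (k z) i := by
  rw [← wr_pow_apply_of_lt_minimalPeriod g hk i hs, Perm.coe_pow,
    minimalPeriod_apply_iterate ((wr k g).injective.mem_periodicPts _), minimalPeriod_wr_apply g hk]

end Wreath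

theorem wreath_cycle_type_general
    (m n : ℕ) (hn : 0 < n)
    (g : Equiv.Perm (Fin n)) (hg : fullCycleType g = {n})
    (h : Equiv.Perm (Fin m)) (α : Multiset ℕ) (hα : fullCycleType h = α) :
    fullCycleType (wr (fun j => if j = (⟨0, hn⟩ : Fin n) then h else 1) g)
      = α.map fun a => n * a := by
  set z : Fin n := ⟨0, hn⟩
  set w := wr (fun j => if j = z then h else 1) g
  have hk : ∀ j ≠ z, (if j = z then h else 1) = 1 := fun j hj => if_neg hj
  have hgz : minimalPeriod g z = n := by
    simpa using minimalPeriod_eq_card_of_fullCycleType_eq (by simpa using hg) z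
  have hw : ∀ p : Fin m × Fin n, minimalPeriod w p = n * minimalPeriod h p.1 := by
    rintro ⟨i, j⟩
    obtain ⟨s, hs, rfl⟩ :=
      Perm.exists_pow_apply_eq_of_minimalPeriod_eq_card (by simpa using hgz) j
    simpa [hgz] using minimalPeriod_wr_apply_pow g hk i (s := s) (by simpa [hgz] using hs)
  subst hα
  refine Multiset.eq_of_bind_replicate_self_eq (zero_notMem_fullCycleType w)
    (by simpa [hn.ne'] using zero_notMem_fullCycleType h) ?_
  rw [fullCycleType_bind_replicate, Multiset.map_mul_bind_replicate_self,
    fullCycleType_bind_replicate, ← univ_product_univ, product_val, Multiset.map_congr rfl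
    fun p _ => hw p]
  calc _ = ((univ.val ×ˢ univ.val).map Prod.fst).map (n * minimalPeriod h ·) := by
        rw [Multiset.map_map]; rfl
    _ = _ := by
      rw [Multiset.map_fst_product, Multiset.map_nsmul, Multiset.map_map, Finset.card_val,
        Finset.card_univ, Fintype.card_fin]
      rfl

/-- **Lemma 3.5.** If `g ∈ S_n` is an `n`-cycle and `h ∈ S_m` has cycle type `α`, then
`(h,1,…,1;g) ∈ S_m ≀ S_n`, regarded as a permutation of `{1,…,m} × {1,…,n}`, has cycle
type `nα`. -/
theorem wreath_cycle_type
    (m n : ℕ) (hm : 0 < m) (hn : 0 < n)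
    (g : Equiv.Perm (Fin n)) (hg : fullCycleType g = {n})
    (h : Equiv.Perm (Fin m)) (α : Multiset ℕ) (hα : fullCycleType h = α) :
    fullCycleType (wr (fun j => if j = (⟨0, hn⟩ : Fin n) then h else 1) g)
      = α.map fun a => n * a :=
  wreath_cycle_type_general m n hn g hg h α hα

end CD
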